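/- arXiv:1710.05254 — 6 statements merged into one kernel-verified Lean document; each statement's English description precedes it below -/
import Mathlib

section
/- Let q₁, q₂, s₁, s₂ be complex numbers satisfying q₁s₁ - q₂s₂ = 0 and Re(q₁·conj(q₂)) = Re(s₂·conj(s₁)). If moreover Re(q₁·conj(q₂)) ≠ 0, then |q₁| = |s₂| and |q₂| = |s₁|. -/
/-! Multiplying `q₁ s₁ = q₂ s₂` by `conj (q₂ s₁)` gives
`q₁ q̄₂ |s₁|² = |q₂|² s₂ s̄₁`; the two real parts agree and are nonzero, so `|s₁| = |q₂|`,
and then `|q₁| |s₁| = |q₂| |s₂|` gives `|q₁| = |s₂|`. -/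

open Complex ComplexConjugate

lemma re_mul_conj_mul_normSq_of_mul_eq {a b c d : ℂ} (h : a * b = c * d) :
    (a * conj c).re * normSq b = normSq c * (d * conj b).re := by
  have key : a * conj c * (b * conj b) = c * conj c * (d * conj b) := by
    linear_combination (conj c * conj b) * h
  rw [mul_conj, mul_conj] at key
  simpa only [re_mul_ofReal, re_ofReal_mul] using congrArg re key

/-- Type II characterization: if `q₁s₁ - q₂s₂ = 0`, `Re(q₁·conj q₂) = Re(s₂·conj s₁)`,
and `Re(q₁·conj q₂) ≠ 0`, then `|q₁| = |s₂|` and `|q₂| = |s₁|`. -/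
theorem stmt_1 (q₁ q₂ s₁ s₂ : ℂ)
    (h1 : q₁ * s₁ - q₂ * s₂ = 0)
    (h2 : (q₁ * (starRingEnd ℂ) q₂).re = (s₂ * (starRingEnd ℂ) s₁).re)
    (h3 : (q₁ * (starRingEnd ℂ) q₂).re ≠ 0) :
    ‖q₁‖ = ‖s₂‖ ∧ ‖q₂‖ = ‖s₁‖ := by
  have h : q₁ * s₁ = q₂ * s₂ := sub_eq_zero.mp h1
  have hnormSq : normSq s₁ = normSq q₂ := by
    refine mul_left_cancel₀ h3 ?_
    rw [re_mul_conj_mul_normSq_of_mul_eq h, ← h2, mul_comm]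
  have hq₂s₁ : ‖q₂‖ = ‖s₁‖ := by rw [norm_def, norm_def, hnormSq]
  have hq₂ : ‖q₂‖ ≠ 0 := by
    rintro hq
    exact h3 (by simp [norm_eq_zero.mp hq])
  have hnorm : ‖q₁‖ * ‖q₂‖ = ‖s₂‖ * ‖q₂‖ := by
    rw [hq₂s₁, ← norm_mul, h, norm_mul, ← hq₂s₁, mul_comm]
  exact ⟨mul_right_cancel₀ hq₂ hnorm, hq₂s₁⟩
end

section
/- Identify ℝ⁶ ≅ ℂ³ via (z¹,z²,z³) = (x¹+ix⁴, x²+ix⁵, x³+ix⁶) with standard basis vectors e₁,…,e₆. For every pair (v,w) of orthonormal vectors in ℝ⁶ there exist A ∈ SU(3) and θ ∈ [0,π] such that A·v = e₁ and A·w = cos(θ)·e₄ + sin(θ)·e₂. -/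
/-!
View `v`, `w` as vectors `V`, `W` of `ℂ³` with its Hermitian product: orthonormality in `ℝ⁶`
says `‖V‖ = ‖W‖ = 1` and `Re ⟪V, W⟫ = 0`, so `⟪V, W⟫ = i t` with `t` real. Gram–Schmidt applied
to `(V, W, W)` gives a unitary basis `(V, u, u')` in which `W = i t V + r u` with `r ≥ 0`, and
`t² + r² = 1`, so `t = cos θ`, `r = sin θ` for `θ = arccos t ∈ [0, π]`. The unitary matrix
sending this basis to the standard one, with its last row rescaled by a phase so that the
determinant is `1`, lies in `SU(3)`, still sends `V ↦ e₁` and `W ↦ i cos θ e₁ + sin θ e₂`,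
i.e. `cos θ e₄ + sin θ e₂` in `ℝ⁶`.
-/

open Complex Matrix InnerProductSpace Module

namespace Matrix

variable {n α : Type*} [Fintype n] [DecidableEq n] [CommRing α] [StarRing α]

theorem diagonal_mulSingle_star_det_mul_mem_specialUnitaryGroup {U : Matrix n n α}
    (hU : U ∈ unitaryGroup n α) (i₀ : n) :
    diagonal (Pi.mulSingle i₀ (star U.det)) * U ∈ specialUnitaryGroup n α := by
  have hdet : star U.det * U.det = 1 := (det_of_mem_unitary hU).1
  have hD : diagonal (Pi.mulSingle i₀ (star U.det)) ∈ unitaryGroup n α := by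
    rw [mem_unitaryGroup_iff', star_eq_conjTranspose, diagonal_conjTranspose,
      diagonal_mul_diagonal, ← diagonal_one]
    congr 1
    funext i
    rcases eq_or_ne i i₀ with rfl | hi
    · simpa [mul_comm] using hdet
    · simp [hi]
  refine mem_specialUnitaryGroup_iff.2 ⟨mul_mem hD hU, ?_⟩
  rw [det_mul, det_diagonal, Finset.prod_pi_mulSingle', if_pos (Finset.mem_univ _), hdet]

end Matrix

namespace OrthonormalBasis

variable {𝕜 ι : Type*} [RCLike 𝕜] [Fintype ι] [DecidableEq ι]

theorem star_toMatrix_mulVec_eq_repr (b : OrthonormalBasis ι 𝕜 (EuclideanSpace 𝕜 ι))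
    (x : EuclideanSpace 𝕜 ι) :
    star ((EuclideanSpace.basisFun ι 𝕜).toBasis.toMatrix b) *ᵥ x.ofLp = (b.repr x).ofLp := by
  have h := Module.Basis.toMatrix_mulVec_repr b.toBasis (EuclideanSpace.basisFun ι 𝕜).toBasis x
  have hb : ⇑(b.toBasis.repr x) = (b.repr x).ofLp := funext (b.coe_toBasis_repr_apply x)
  have hstd : ⇑((EuclideanSpace.basisFun ι 𝕜).toBasis.repr x) = x.ofLp := rfl
  rw [OrthonormalBasis.coe_toBasis, hb, hstd] at h
  rw [← h, mulVec_mulVec, star_eq_conjTranspose, toMatrix_orthonormalBasis_conjTranspose_mul_self,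
    one_mulVec]

/-- Rescaling the `i₀`-th row of the unitary matrix with rows `star (b i)` fixes its determinant
to `1` without affecting vectors whose `i₀`-th coordinate in `b` vanishes. -/
theorem exists_mem_specialUnitaryGroup_mulVec_eq_repr
    (b : OrthonormalBasis ι 𝕜 (EuclideanSpace 𝕜 ι)) (i₀ : ι) :
    ∃ A ∈ specialUnitaryGroup ι 𝕜, ∀ x : EuclideanSpace 𝕜 ι, b.repr x i₀ = 0 →
      A *ᵥ x.ofLp = (b.repr x).ofLp := by
  have hU :=
    Unitary.star_mem ((EuclideanSpace.basisFun ι 𝕜).toMatrix_orthonormalBasis_mem_unitary b)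
  refine ⟨_, diagonal_mulSingle_star_det_mul_mem_specialUnitaryGroup hU i₀, fun x hx => ?_⟩
  rw [← mulVec_mulVec, b.star_toMatrix_mulVec_eq_repr]
  funext i
  rw [mulVec_diagonal]
  rcases eq_or_ne i i₀ with rfl | hi
  · simp [hx]
  · simp [hi]

end OrthonormalBasis

namespace InnerProductSpace

variable {𝕜 E ι : Type*} [RCLike 𝕜] [NormedAddCommGroup E] [InnerProductSpace 𝕜 E]
  [LinearOrder ι] [LocallyFiniteOrderBot ι] [WellFoundedLT ι]

theorem inner_gramSchmidt_self (f : ι → E) (n : ι) :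
    inner 𝕜 (gramSchmidt 𝕜 f n) (f n) = (‖gramSchmidt 𝕜 f n‖ : 𝕜) ^ 2 := by
  rw [gramSchmidt_def'' 𝕜 f n, inner_add_right, inner_sum, inner_self_eq_norm_sq_to_K,
    add_eq_left]
  refine Finset.sum_eq_zero fun i hi => ?_
  rw [inner_smul_right, gramSchmidt_orthogonal 𝕜 f (Finset.mem_Iio.1 hi).ne', mul_zero]

theorem inner_gramSchmidtOrthonormalBasis_self [Fintype ι] [FiniteDimensional 𝕜 E]
    (h : finrank 𝕜 E = Fintype.card ι) (f : ι → E) (i : ι) :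
    inner 𝕜 (gramSchmidtOrthonormalBasis h f i) (f i) = (‖gramSchmidt 𝕜 f i‖ : 𝕜) := by
  by_cases hg : gramSchmidt 𝕜 f i = 0
  · rw [inner_gramSchmidtOrthonormalBasis_eq_zero h (by simp [gramSchmidtNormed, hg]), hg,
      norm_zero, RCLike.ofReal_zero]
  have hnormed : gramSchmidtNormed 𝕜 f i ≠ 0 := by simpa [gramSchmidtNormed] using hg
  rw [gramSchmidtOrthonormalBasis_apply h hnormed, gramSchmidtNormed, inner_smul_left,
    inner_gramSchmidt_self, RCLike.conj_inv, RCLike.conj_ofReal]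
  have : (‖gramSchmidt 𝕜 f i‖ : 𝕜) ≠ 0 := by simpa using hg
  field_simp

end InnerProductSpace

/-- Gram–Schmidt applied to `(v, w, w, …)`: by triangularity only the first two coordinates of `w`
survive, and the second is the norm of the component of `w` orthogonal to `v`. -/
theorem exists_orthonormalBasis_repr_eq_single {𝕜 E : Type*} [RCLike 𝕜] [NormedAddCommGroup E]
    [InnerProductSpace 𝕜 E] [FiniteDimensional 𝕜 E] {n : ℕ} (h : finrank 𝕜 E = n + 2) {v : E}
    (hv : ‖v‖ = 1) (w : E) :
    ∃ b : OrthonormalBasis (Fin (n + 2)) 𝕜 E, ∃ r : ℝ, 0 ≤ r ∧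
      b.repr v = EuclideanSpace.single 0 1 ∧
      b.repr w = inner 𝕜 v w • EuclideanSpace.single 0 1 + (r : 𝕜) • EuclideanSpace.single 1 1 := by
  set f : Fin (n + 2) → E := fun i => if i = 0 then v else w
  have hf1 : f 1 = w := by simp [f]
  have hcard : finrank 𝕜 E = Fintype.card (Fin (n + 2)) := h.trans (Fintype.card_fin _).symm
  set b := gramSchmidtOrthonormalBasis hcard f with hb
  have hb0 : b 0 = v := by
    have hnormed : gramSchmidtNormed 𝕜 f 0 = v := by
      simp [gramSchmidtNormed, ← bot_eq_zero, f, hv]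
    rw [← hnormed]
    exact gramSchmidtOrthonormalBasis_apply _ (by simp [hnormed, ← norm_ne_zero_iff, hv])
  refine ⟨b, ‖gramSchmidt 𝕜 f 1‖, norm_nonneg _, by rw [← hb0, b.repr_self], ?_⟩
  ext j
  rcases eq_or_ne j 0 with rfl | hj0
  · simp [b.repr_apply_apply, hb0]
  rcases eq_or_ne j 1 with rfl | hj1
  · rw [b.repr_apply_apply, ← hf1, inner_gramSchmidtOrthonormalBasis_self]
    simp [RCLike.real_smul_eq_coe_mul]
  · have h1j : (1 : Fin (n + 2)) < j := by
      simp only [Fin.lt_def, ne_eq, Fin.ext_iff, Fin.val_one, Fin.val_zero] at hj0 hj1 ⊢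
      omega
    have := gramSchmidtOrthonormalBasis_inv_triangular' hcard f h1j
    rw [← hb, hf1] at this
    simp [this, hj0, hj1]

theorem Real.exists_mem_Icc_cos_eq_sin_eq {t r : ℝ} (hr : 0 ≤ r) (h : t ^ 2 + r ^ 2 = 1) :
    ∃ θ ∈ Set.Icc 0 Real.pi, cos θ = t ∧ sin θ = r := by
  refine ⟨arccos t, ⟨arccos_nonneg t, arccos_le_pi t⟩,
    cos_arccos (by nlinarith) (by nlinarith), ?_⟩
  rw [sin_arccos, ← h, add_sub_cancel_left, sqrt_sq hr]

/-- Lemma 3.1(a), transitivity part.  Identify `ℝ⁶ ≅ ℂ³` via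
`(z¹,z²,z³) = (x¹+ix⁴, x²+ix⁵, x³+ix⁶)`; orthonormality of `(v,w)` in `ℝ⁶` means
`‖v‖ = ‖w‖ = 1` and `Re Σ conj(vⱼ)·wⱼ = 0`.  Every such pair can be moved by some
`A ∈ SU(3)` to `(e₁, cos(θ)e₄ + sin(θ)e₂) = ((1,0,0), (i·cosθ, sinθ, 0))` with
`θ ∈ [0,π]`. -/
theorem stmt_5 (v w : Fin 3 → ℂ)
    (hv : ∑ i, Complex.normSq (v i) = 1)
    (hw : ∑ i, Complex.normSq (w i) = 1)
    (hvw : (∑ i, (starRingEnd ℂ) (v i) * w i).re = 0) :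
    ∃ A ∈ Matrix.specialUnitaryGroup (Fin 3) ℂ, ∃ θ ∈ Set.Icc (0 : ℝ) Real.pi,
      A *ᵥ v = ![1, 0, 0] ∧
      A *ᵥ w = ![Complex.I * Real.cos θ, (Real.sin θ : ℂ), 0] := by
  set V := WithLp.toLp 2 v
  set W := WithLp.toLp 2 w
  have hnorm (x : Fin 3 → ℂ) : ‖WithLp.toLp 2 x‖ ^ 2 = ∑ i, Complex.normSq (x i) := by
    simp [EuclideanSpace.norm_sq_eq, Complex.normSq_eq_norm_sq]
  have hV : ‖V‖ = 1 := by
    rw [← pow_eq_one_iff_of_nonneg (norm_nonneg _) two_ne_zero, hnorm, hv]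
  have hVW : inner ℂ V W = (inner ℂ V W).im * I := by
    have hre : (inner ℂ V W).re = 0 := by
      rw [EuclideanSpace.inner_toLp_toLp, dotProduct, ← hvw]
      simp only [Pi.star_apply, RCLike.star_def, mul_comm]
    apply Complex.ext <;> simp [hre]
  obtain ⟨b, r, hr, hbV, hbW⟩ := exists_orthonormalBasis_repr_eq_single
    (finrank_euclideanSpace_fin (𝕜 := ℂ) (n := 3)) hV W
  have hparseval : (inner ℂ V W).im ^ 2 + r ^ 2 = 1 := by
    have h := hnorm w
    rw [hw, ← b.repr.norm_map, hbW, EuclideanSpace.norm_sq_eq, Fin.sum_univ_three, hVW] at h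
    simpa using h
  obtain ⟨θ, hθ, hcos, hsin⟩ := Real.exists_mem_Icc_cos_eq_sin_eq hr hparseval
  obtain ⟨A, hA, hAx⟩ := b.exists_mem_specialUnitaryGroup_mulVec_eq_repr 2
  refine ⟨A, hA, θ, hθ, ?_, ?_⟩
  · rw [hAx V (by simp [hbV]), hbV]
    ext i; fin_cases i <;> simp
  · rw [hAx W (by simp [hbW]), hbW, hVW, hcos, hsin]
    ext i; fin_cases i <;> simp [mul_comm]
end

section
/- Identify ℝ⁶ ≅ ℂ³ via (z¹,z²,z³) = (x¹+ix⁴, x²+ix⁵, x³+ix⁶). If A ∈ SU(3) fixes the ordered pair (e₁, cos(θ)e₄ + sin(θ)e₂) with θ ∈ (0,π), then A is the identity. -/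
open Complex Matrix

/-- Lemma 3.1(a), freeness: if `A ∈ SU(3)` fixes the ordered pair
`(e₁, cosθ·e₄ + sinθ·e₂) = ((1,0,0), (i·cosθ, sinθ, 0))` with `θ ∈ (0,π)`, then
`A = 1`. -/
theorem stmt_7 (θ : ℝ) (hθ : θ ∈ Set.Ioo 0 Real.pi)
    (A : Matrix (Fin 3) (Fin 3) ℂ) (hA : A ∈ Matrix.specialUnitaryGroup (Fin 3) ℂ)
    (h1 : A *ᵥ ![(1 : ℂ), 0, 0] = ![(1 : ℂ), 0, 0])
    (h2 : A *ᵥ ![Complex.I * Real.cos θ, (Real.sin θ : ℂ), 0] =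
      ![Complex.I * Real.cos θ, (Real.sin θ : ℂ), 0]) :
    A = 1 := by
  obtain ⟨hU, hdet⟩ := Matrix.mem_specialUnitaryGroup_iff.mp hA
  rw [Matrix.mem_unitaryGroup_iff] at hU
  have hs : (Real.sin θ : ℂ) ≠ 0 :=
    Complex.ofReal_ne_zero.mpr (ne_of_gt (Real.sin_pos_of_pos_of_lt_pi hθ.1 hθ.2))
  have a00 : A 0 0 = 1 := by
    have := congrFun h1 0
    simpa [Matrix.mulVec, dotProduct, Fin.sum_univ_three] using this
  have a10 : A 1 0 = 0 := by
    have := congrFun h1 1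
    simpa [Matrix.mulVec, dotProduct, Fin.sum_univ_three] using this
  have a20 : A 2 0 = 0 := by
    have := congrFun h1 2
    simpa [Matrix.mulVec, dotProduct, Fin.sum_univ_three] using this
  have hs' : Complex.sin (θ : ℂ) ≠ 0 := by rw [← Complex.ofReal_sin]; exact hs
  have a01 : A 0 1 = 0 := by
    have h := congrFun h2 0
    simp [Matrix.mulVec, dotProduct, Fin.sum_univ_three, a00] at h
    exact h.resolve_right hs'
  have a11 : A 1 1 = 1 := by
    have h := congrFun h2 1
    simp [Matrix.mulVec, dotProduct, Fin.sum_univ_three, a10] at h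
    exact mul_right_cancel₀ hs' (h.trans (one_mul _).symm)
  have a21 : A 2 1 = 0 := by
    have h := congrFun h2 2
    simp [Matrix.mulVec, dotProduct, Fin.sum_univ_three, a20] at h
    exact h.resolve_right hs' 
  have a02 : A 0 2 = 0 := by
    have h := congrFun (congrFun hU 0) 0
    simp [Matrix.mul_apply, Fin.sum_univ_three, a00, a01, Matrix.one_apply] at h
    exact h
  have a12 : A 1 2 = 0 := by
    have h := congrFun (congrFun hU 1) 1
    simp [Matrix.mul_apply, Fin.sum_univ_three, a10, a11, Matrix.one_apply] at h
    exact h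
  have a22 : A 2 2 = 1 := by
    rw [Matrix.det_fin_three, a00, a01, a02, a10, a11, a12, a20, a21] at hdet
    linear_combination hdet
  ext i j
  fin_cases i <;> fin_cases j <;>
    simp [a00, a01, a02, a10, a11, a12, a20, a21, a22, Matrix.one_apply]
end

section
/- Suppose smooth real-valued functions a₁, a₂, a₀ on a connected manifold satisfy the system da₁ = (a₀² - a₁² - 3)ω¹ - a₁a₂ω² - a₂φ, da₂ = -a₁a₂ω¹ + (a₀² - a₂² - 3)ω² + a₁φ, da₀ = -2a₀a₁ω¹ - 2a₀a₂ω² for some 1-forms ω¹, ω², φ. Then the function a₀/(a₀² + a₁² + a₂² + 3) is constant. -/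
/-! With `θ = -2 (a₁ ω¹ + a₂ ω²)` the system gives `da₀ = a₀ θ`, and the `φ`-terms cancel in
`d(a₀² + a₁² + a₂² + 3) = (a₀² + a₁² + a₂² + 3) θ`. Numerator and denominator thus have the same
logarithmic derivative, so the quotient has zero differential and is constant on the connected
open set. -/

section

variable {E : Type*} [NormedAddCommGroup E] [NormedSpace ℝ E] {x : E}

theorem hasFDerivAt_div_zero_of_smul_same {c d : E → ℝ} {θ : E →L[ℝ] ℝ}
    (hc : HasFDerivAt c (c x • θ) x) (hd : HasFDerivAt d (d x • θ) x) (hx : d x ≠ 0) :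
    HasFDerivAt (fun y => c y / d y) (0 : E →L[ℝ] ℝ) x := by
  simp only [div_eq_mul_inv]
  refine (hc.mul ((hasDerivAt_inv hx).comp_hasFDerivAt x hd)).congr_fderiv ?_
  match_scalars
  simp only [Function.comp_apply]
  field_simp
  ring

theorem hasFDerivAt_sq_add_sq_add_sq_add_three {a₁ a₂ a₀ : E → ℝ} {ω₁ ω₂ φ : E →L[ℝ] ℝ}
    (h₁ : HasFDerivAt a₁ ((a₀ x ^ 2 - a₁ x ^ 2 - 3) • ω₁ - (a₁ x * a₂ x) • ω₂ - a₂ x • φ) x)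
    (h₂ : HasFDerivAt a₂ (-(a₁ x * a₂ x) • ω₁ + (a₀ x ^ 2 - a₂ x ^ 2 - 3) • ω₂ + a₁ x • φ) x)
    (h₀ : HasFDerivAt a₀ (-(2 * a₀ x * a₁ x) • ω₁ - (2 * a₀ x * a₂ x) • ω₂) x) :
    HasFDerivAt (fun y => a₀ y ^ 2 + a₁ y ^ 2 + a₂ y ^ 2 + 3)
      ((a₀ x ^ 2 + a₁ x ^ 2 + a₂ x ^ 2 + 3) • (-(2 * a₁ x) • ω₁ - (2 * a₂ x) • ω₂)) x := by
  refine (((h₀.pow 2).add (h₁.pow 2)).add (h₂.pow 2)).add_const 3 |>.congr_fderiv ?_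
  simp only [nsmul_eq_mul, Nat.cast_ofNat]
  module

end

/-- Theorem 6.3(a), conserved quantity: if smooth functions `a₁ a₂ a₀` satisfy the
system (6.2), i.e.
`da₁ = (a₀²-a₁²-3)ω¹ - a₁a₂ω² - a₂φ`,
`da₂ = -a₁a₂ω¹ + (a₀²-a₂²-3)ω² + a₁φ`,
`da₀ = -2a₀a₁ω¹ - 2a₀a₂ω² `
for some 1-forms `ω¹, ω², φ`, on a connected open set, then
`a₀/(a₀² + a₁² + a₂² + 3)` is constant there. -/
theorem stmt_14 {E : Type*} [NormedAddCommGroup E] [NormedSpace ℝ E]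
    (s : Set E) (hs : IsOpen s) (hconn : IsConnected s)
    (a₁ a₂ a₀ : E → ℝ) (ω₁ ω₂ φ : E → (E →L[ℝ] ℝ))
    (h₁ : ∀ x ∈ s, HasFDerivAt a₁
      ((a₀ x ^ 2 - a₁ x ^ 2 - 3) • ω₁ x - (a₁ x * a₂ x) • ω₂ x - a₂ x • φ x) x)
    (h₂ : ∀ x ∈ s, HasFDerivAt a₂
      (-(a₁ x * a₂ x) • ω₁ x + (a₀ x ^ 2 - a₂ x ^ 2 - 3) • ω₂ x + a₁ x • φ x) x)
    (h₀ : ∀ x ∈ s, HasFDerivAt a₀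
      (-(2 * a₀ x * a₁ x) • ω₁ x - (2 * a₀ x * a₂ x) • ω₂ x) x) :
    ∀ x ∈ s, ∀ y ∈ s,
      a₀ x / (a₀ x ^ 2 + a₁ x ^ 2 + a₂ x ^ 2 + 3) =
      a₀ y / (a₀ y ^ 2 + a₁ y ^ 2 + a₂ y ^ 2 + 3) := by
  have hf : ∀ x ∈ s,
      HasFDerivAt (fun y => a₀ y / (a₀ y ^ 2 + a₁ y ^ 2 + a₂ y ^ 2 + 3)) (0 : E →L[ℝ] ℝ) x := by
    intro x hx
    exact hasFDerivAt_div_zero_of_smul_same ((h₀ x hx).congr_fderiv (by module))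
      (hasFDerivAt_sq_add_sq_add_sq_add_three (h₁ x hx) (h₂ x hx) (h₀ x hx)) (by positivity)
  intro x hx y hy
  exact hs.is_const_of_fderiv_eq_zero hconn.isPreconnected
    (fun z hz => (hf z hz).differentiableAt.differentiableWithinAt)
    (fun z hz => (hf z hz).fderiv) hx hy
end

section
/- Define the 3×3 Jacobian-type matrix J(a₁,a₂,a₀) with rows (a₀² - a₁² - 3, -a₁a₂, -a₂), (-a₁a₂, a₀² - a₂² - 3, a₁), (-2a₀a₁, -2a₀a₂, 0). Then J has rank at most 2 for all (a₁,a₂,a₀) ∈ ℝ³ (i.e., det J = 0 identically), J has rank 0 if and only if (a₁,a₂,a₀) = (0,0,√3) or (0,0,-√3), and J never has rank exactly 1. -/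
/-- The matrix of the right-hand side of the torsion system (6.2). -/
def Jmat (a₁ a₂ a₀ : ℝ) : Matrix (Fin 3) (Fin 3) ℝ :=
  !![a₀ ^ 2 - a₁ ^ 2 - 3, -(a₁ * a₂), -a₂;
     -(a₁ * a₂), a₀ ^ 2 - a₂ ^ 2 - 3, a₁;
     -(2 * a₀ * a₁), -(2 * a₀ * a₂), 0]

/-- If some 2×2 minor of a 3×3 real matrix is nonzero, the rank is at least 2. -/
lemma two_le_rank_of_minor (M : Matrix (Fin 3) (Fin 3) ℝ) (i j k l : Fin 3)
    (h : M i k * M j l - M i l * M j k ≠ 0) : 2 ≤ M.rank := by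
  set B : Matrix (Fin 2) (Fin 3) ℝ := Matrix.of fun a b => if ![i, j] a = b then (1:ℝ) else 0
    with hB
  set C : Matrix (Fin 3) (Fin 2) ℝ := Matrix.of fun a b => if a = ![k, l] b then (1:ℝ) else 0
    with hC
  have hBC : B * M * C = Matrix.of fun a b => M (![i, j] a) (![k, l] b) := by
    ext a b
    simp [hB, hC, Matrix.mul_apply, ite_mul, mul_ite, Finset.sum_ite_eq, Finset.sum_ite_eq']
  have hdet : (B * M * C).det ≠ 0 := by
    rw [hBC, Matrix.det_fin_two]
    simpa using h
  have h2 : (B * M * C).rank = 2 := by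
    have := Matrix.rank_of_isUnit (B * M * C)
      ((Matrix.isUnit_iff_isUnit_det _).mpr (isUnit_iff_ne_zero.mpr hdet))
    simpa using this
  calc (2 : ℕ) = (B * M * C).rank := h2.symm
    _ = (B * (M * C)).rank := by rw [Matrix.mul_assoc]
    _ ≤ (M * C).rank := Matrix.rank_mul_le_right _ _
    _ ≤ M.rank := Matrix.rank_mul_le_left _ _

lemma rank_zero_iff' (M : Matrix (Fin 3) (Fin 3) ℝ) : M.rank = 0 ↔ M = 0 := by
  constructor
  · intro h
    rw [Matrix.rank] at h
    have hr : LinearMap.range M.mulVecLin = ⊥ := Submodule.finrank_eq_zero.mp h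
    rw [LinearMap.range_eq_bot] at hr
    ext i j
    have h2 : M.mulVecLin (Pi.single j 1) = 0 := by rw [hr]; rfl
    have h3 := congrFun h2 i
    simpa [Matrix.mulVecLin_apply, Matrix.mulVec_single] using h3
  · intro h; rw [h]; exact Matrix.rank_zero

/-- Theorem 6.3(a): `J` always has rank ≤ 2 (its determinant vanishes identically),
has rank `0` iff `(a₁,a₂,a₀) = (0,0,±√3)`, and never has rank exactly `1`. -/
theorem stmt_15 (a₁ a₂ a₀ : ℝ) :
    (Jmat a₁ a₂ a₀).det = 0 ∧
    ((Jmat a₁ a₂ a₀).rank = 0 ↔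
      (a₁ = 0 ∧ a₂ = 0 ∧ (a₀ = Real.sqrt 3 ∨ a₀ = -Real.sqrt 3))) ∧
    (Jmat a₁ a₂ a₀).rank ≠ 1 := by
  have hsq : Real.sqrt 3 ^ 2 = 3 := Real.sq_sqrt (by norm_num)
  have hiff : (Jmat a₁ a₂ a₀).rank = 0 ↔
      (a₁ = 0 ∧ a₂ = 0 ∧ (a₀ = Real.sqrt 3 ∨ a₀ = -Real.sqrt 3)) := by
    rw [rank_zero_iff']
    constructor
    · intro h
      have h12 : a₁ = 0 := by
        have := congrFun (congrFun h 1) 2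
        simpa [Jmat] using this
      have h02 : a₂ = 0 := by
        have := congrFun (congrFun h 0) 2
        have h' : -a₂ = 0 := by simpa [Jmat] using this
        linarith
      have h00 : a₀ ^ 2 - a₁ ^ 2 - 3 = 0 := by
        have := congrFun (congrFun h 0) 0
        simpa [Jmat] using this
      refine ⟨h12, h02, ?_⟩
      have hfac : (a₀ - Real.sqrt 3) * (a₀ + Real.sqrt 3) = 0 := by nlinarith
      rcases mul_eq_zero.mp hfac with h' | h'
      · left; linarith
      · right; linarith
    · rintro ⟨rfl, rfl, h⟩
      have h3 : a₀ ^ 2 = 3 := by rcases h with rfl | rfl <;> nlinarith [hsq]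
      ext i j
      fin_cases i <;> fin_cases j <;>
        simp [Jmat, h3, Matrix.vecHead, Matrix.vecTail]
  refine ⟨?_, hiff, ?_⟩
  · simp only [Jmat, Matrix.det_fin_three]
    simp [Matrix.cons_val_zero, Matrix.cons_val_one]
    ring
  · intro h1
    have hne : ¬(a₁ = 0 ∧ a₂ = 0 ∧ (a₀ = Real.sqrt 3 ∨ a₀ = -Real.sqrt 3)) := by
      intro hc
      have := hiff.mpr hc
      omega
    set M := Jmat a₁ a₂ a₀ with hM
    have h2le : 2 ≤ M.rank := by
      by_cases h1z : a₁ = 0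
      · by_cases h2z : a₂ = 0
        · -- a₁ = a₂ = 0, a₀² ≠ 3
          have ha : a₀ ^ 2 - 3 ≠ 0 := by
            intro hc
            apply hne
            refine ⟨h1z, h2z, ?_⟩
            have hfac : (a₀ - Real.sqrt 3) * (a₀ + Real.sqrt 3) = 0 := by nlinarith
            rcases mul_eq_zero.mp hfac with h' | h'
            · left; linarith
            · right; linarith
          have key : M 0 0 * M 1 1 - M 0 1 * M 1 0 = (a₀ ^ 2 - 3) * (a₀ ^ 2 - 3) := by
            subst h1z h2z; simp [hM, Jmat]; try ring
          exact two_le_rank_of_minor M 0 1 0 1 (by rw [key]; exact mul_ne_zero ha ha)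
        · -- a₂ ≠ 0
          by_cases h0z : a₀ = 0
          · have key : M 0 1 * M 1 2 - M 0 2 * M 1 1 =
                a₂ * (a₀ ^ 2 - a₁ ^ 2 - a₂ ^ 2 - 3) := by
              simp [hM, Jmat]; try ring
            refine two_le_rank_of_minor M 0 1 1 2 ?_
            rw [key]
            subst h0z h1z
            intro hc
            rcases mul_eq_zero.mp hc with h' | h'
            · exact h2z h'
            · nlinarith
          · have key : M 0 1 * M 2 2 - M 0 2 * M 2 1 = -(2 * a₀ * a₂ ^ 2) := by
              simp [hM, Jmat]; try ring
            refine two_le_rank_of_minor M 0 2 1 2 ?_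
            rw [key]
            exact neg_ne_zero.mpr
              (mul_ne_zero (mul_ne_zero two_ne_zero h0z) (pow_ne_zero 2 h2z))
      · -- a₁ ≠ 0
        by_cases h0z : a₀ = 0
        · have key : M 0 0 * M 1 2 - M 0 2 * M 1 0 =
              a₁ * (a₀ ^ 2 - a₁ ^ 2 - a₂ ^ 2 - 3) := by
            simp [hM, Jmat]; try ring
          refine two_le_rank_of_minor M 0 1 0 2 ?_
          rw [key]
          subst h0z
          intro hc
          rcases mul_eq_zero.mp hc with h' | h'
          · exact h1z h'
          · nlinarith
        · have key : M 1 0 * M 2 2 - M 1 2 * M 2 0 = 2 * a₀ * a₁ ^ 2 := by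
            simp [hM, Jmat]; try ring
          refine two_le_rank_of_minor M 1 2 0 2 ?_
          rw [key]
          exact mul_ne_zero (mul_ne_zero two_ne_zero h0z) (pow_ne_zero 2 h1z)
    omega
end

section
/- Let q₁, q₂, s₁, s₂ be complex numbers with q₁s₁ = q₂s₂, Re(q₁·conj(q₂)) = Re(s₂·conj(s₁)) = 0, and (q₁,q₂,s₁,s₂) ≠ 0. Then there exist complex numbers z, w and real numbers t₁, t₂ with (z,w) ≠ (0,0), (t₁,t₂) ≠ (0,0), such that q₁ = i·t₁·z, q₂ = t₂·z, s₂ = i·t₁·w, s₁ = t₂·w. -/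
open Complex

lemma key_factor (a b : ℂ) (h : (a * (starRingEnd ℂ) b).re = 0) (hb : b ≠ 0) :
    a = Complex.I * (((a * (starRingEnd ℂ) b).im / Complex.normSq b : ℝ) : ℂ) * b := by
  have hns : (Complex.normSq b : ℂ) ≠ 0 := by
    exact_mod_cast (Complex.normSq_pos.mpr hb).ne'
  have hprod : a * (starRingEnd ℂ) b = (((a * (starRingEnd ℂ) b).im : ℝ) : ℂ) * Complex.I := by
    apply Complex.ext <;> simp [h]
  have hmul : (starRingEnd ℂ) b * b = (Complex.normSq b : ℂ) := by
    rw [mul_comm]; exact Complex.mul_conj b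
  have hmain : a * (Complex.normSq b : ℂ)
      = Complex.I * (((a * (starRingEnd ℂ) b).im : ℝ) : ℂ) * b := by
    calc a * (Complex.normSq b : ℂ) = (a * (starRingEnd ℂ) b) * b := by rw [mul_assoc, hmul]
      _ = _ := by linear_combination b * hprod
  set r := (a * (starRingEnd ℂ) b).im with hr
  rw [Complex.ofReal_div]
  rw [eq_comm, mul_assoc, mul_comm, ← div_eq_iff hns] at hmain
  rw [← hmain]; ring

/-- §5.3.1 factorization: if `q₁s₁ = q₂s₂`, `Re(q₁·conj q₂) = 0 = Re(s₂·conj s₁)`, and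
`(q₁,q₂,s₁,s₂) ≠ 0`, then the matrix factors as `(q₁ q₂; s₂ s₁) = (z; w)·(it₁, t₂)`
with `(z,w) ≠ (0,0)` and `(t₁,t₂) ≠ (0,0)`. -/
theorem stmt_19 (q₁ q₂ s₁ s₂ : ℂ)
    (h1 : q₁ * s₁ = q₂ * s₂)
    (h2 : (q₁ * (starRingEnd ℂ) q₂).re = 0)
    (h3 : (s₂ * (starRingEnd ℂ) s₁).re = 0)
    (h4 : ¬(q₁ = 0 ∧ q₂ = 0 ∧ s₁ = 0 ∧ s₂ = 0)) :
    ∃ (z w : ℂ) (t₁ t₂ : ℝ), ¬(z = 0 ∧ w = 0) ∧ ¬(t₁ = 0 ∧ t₂ = 0) ∧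
      q₁ = Complex.I * t₁ * z ∧ q₂ = t₂ * z ∧
      s₂ = Complex.I * t₁ * w ∧ s₁ = t₂ * w := by
  by_cases hq2 : q₂ ≠ 0
  · -- z = q₂, t₂ = 1, t₁ = im(q₁ q̄₂)/|q₂|², w = s₁
    set t₁ : ℝ := (q₁ * (starRingEnd ℂ) q₂).im / Complex.normSq q₂ with ht₁
    have hq1 : q₁ = Complex.I * (t₁ : ℂ) * q₂ := key_factor q₁ q₂ h2 hq2
    refine ⟨q₂, s₁, t₁, 1, fun h => hq2 h.1, by simp, hq1, by simp, ?_, by simp⟩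
    have hc : q₂ * s₂ = q₂ * (Complex.I * (t₁ : ℂ) * s₁) := by
      rw [← h1, hq1]; ring
    exact mul_left_cancel₀ hq2 hc
  · push_neg at hq2
    by_cases hq1 : q₁ ≠ 0
    · -- q₂ = 0 forces s₁ = 0; z = -I q₁, t₁ = 1, t₂ = 0, w = -I s₂
      have hs1 : s₁ = 0 := by
        have h' := h1; rw [hq2, zero_mul] at h'
        rcases mul_eq_zero.mp h' with h | h
        · exact absurd h hq1
        · exact h
      refine ⟨-Complex.I * q₁, -Complex.I * s₂, 1, 0,
        fun h => hq1 (by simpa using h.1), by simp, ?_, by simp [hq2], ?_, by simp [hs1]⟩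
      · push_cast; ring_nf; simp [Complex.I_sq]
      · push_cast; ring_nf; simp [Complex.I_sq]
    · push_neg at hq1
      by_cases hs1 : s₁ ≠ 0
      · -- w = s₁, t₂ = 1, t₁ from h3, z = 0
        set t₁ : ℝ := (s₂ * (starRingEnd ℂ) s₁).im / Complex.normSq s₁ with ht₁
        have hs2 : s₂ = Complex.I * (t₁ : ℂ) * s₁ := key_factor s₂ s₁ h3 hs1
        exact ⟨0, s₁, t₁, 1, fun h => hs1 h.2, by simp, by simp [hq1], by simp [hq2],
          hs2, by simp⟩
      · push_neg at hs1
        have hs2 : s₂ ≠ 0 := fun h => h4 ⟨hq1, hq2, hs1, h⟩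
        refine ⟨0, -Complex.I * s₂, 1, 0,
          fun h => hs2 (by simpa using h.2), by simp, by simp [hq1], by simp [hq2],
          ?_, by simp [hs1]⟩
        push_cast; ring_nf; simp [Complex.I_sq]
end
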